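/- Let F ⊆ [−1,1]^X, let α > 0, and suppose x*_1,…,x*_d ∈ X is α-shattered by F with witness s_1,…,s_d. Let T = k·d for a positive integer k and let the sequence x_1,…,x_T consist of k consecutive copies of each x*_i. Then for y_1,…,y_T drawn i.i.d. uniformly from {−1,1}, E_y[ sup_{f∈F} Σ_{t=1}^T y_t·f(x_t) ] ≥ (α·d/2)·E[ |Σ_{j=1}^k y_j| ] ≥ α·sqrt(T·d/8). -/

import Mathlib

open MeasureTheory Real Filter
open scoped Classical

namespace OLR

universe u

/-- Expectation of a real-valued function of a random seed. -/
noncomputable def expect {Ω : Type} {m : MeasurableSpace Ω} (μ : Measure Ω)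
    (g : Ω → ℝ) : ℝ :=
  ∫ ω, g ω ∂μ

/-- The real-valued sign `±1` encoded by a boolean. -/
def rsign (b : Bool) : ℝ := if b then 1 else -1

/-- All labels lie in `[0,1]`. -/
def Labels01 {T : ℕ} (y : Fin T → ℝ) : Prop := ∀ t, y t ∈ Set.Icc (0 : ℝ) 1

/-- The loss `ℓ` is `L`-Lipschitz in its first (prediction) argument. -/
def LipschitzLoss (ℓ : ℝ → ℝ → ℝ) (L : ℝ) : Prop :=
  ∀ a b y : ℝ, |ℓ a y - ℓ b y| ≤ L * |a - b|

/-- The loss `ℓ(·, y)` is convex for every label `y ∈ [0,1]`. -/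
def ConvexLoss (ℓ : ℝ → ℝ → ℝ) : Prop :=
  ∀ y ∈ Set.Icc (0 : ℝ) 1, ConvexOn ℝ (Set.Icc (0 : ℝ) 1) fun a => ℓ a y

/-- The loss `ℓ` maps `[0,1] × [0,1]` into `[0,1]`. -/
def LossRange01 (ℓ : ℝ → ℝ → ℝ) : Prop :=
  ∀ a y : ℝ, a ∈ Set.Icc (0 : ℝ) 1 → y ∈ Set.Icc (0 : ℝ) 1 → ℓ a y ∈ Set.Icc (0 : ℝ) 1

/-- A finite sequence `x : Fin d → X` is `α`-shattered by the class `F`: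
there is a witness `s` such that every sign pattern is realized with margin `α/2`. -/
def Shatters {X : Type u} (F : Set (X → ℝ)) (α : ℝ) {d : ℕ} (x : Fin d → X) : Prop :=
  ∃ s : Fin d → ℝ, ∀ σ : Fin d → Bool, ∃ f ∈ F, ∀ i : Fin d,
    (if σ i then f (x i) - s i else s i - f (x i)) ≥ α / 2

/-- The fat-shattering dimension of `F` at scale `α`. -/
noncomputable def fatDim {X : Type u} (F : Set (X → ℝ)) (α : ℝ) : ℕ∞ :=
  ⨆ d : {d : ℕ // ∃ x : Fin d → X, Shatters F α x}, (d.1 : ℕ∞)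

/-- A (randomized) transductive online learner over horizon `T`: it sees the whole
example sequence in advance, and in round `t` predicts from the examples, the labels
of rounds `s < t` (causality), and a private random seed. -/
structure TransLearner (X : Type u) (T : ℕ) where
  Ω : Type
  mΩ : MeasurableSpace Ω
  μ : @Measure Ω mΩ
  prob : @IsProbabilityMeasure Ω mΩ μ
  predict : (Fin T → X) → (Fin T → ℝ) → Fin T → Ω → ℝ
  causal : ∀ (x : Fin T → X) (y y' : Fin T → ℝ) (t : Fin T) (ω : Ω),
      (∀ s : Fin T, s < t → y s = y' s) → predict x y t ω = predict x y' t ω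

/-- Expected cumulative loss of a transductive learner on a stream. -/
noncomputable def transLoss {X : Type u} {T : ℕ} (ℓ : ℝ → ℝ → ℝ)
    (B : TransLearner X T) (x : Fin T → X) (y : Fin T → ℝ) : ℝ :=
  @expect B.Ω B.mΩ B.μ fun ω => ∑ t, ℓ (B.predict x y t ω) (y t)

/-- Cumulative loss of the best function of `F` in hindsight. -/
noncomputable def bestLoss {X : Type u} {T : ℕ} (ℓ : ℝ → ℝ → ℝ)
    (F : Set (X → ℝ)) (x : Fin T → X) (y : Fin T → ℝ) : ℝ :=
  ⨅ f : F, ∑ t, ℓ (f.1 (x t)) (y t)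

/-- Minimax expected regret of a transductive online learner `B`. -/
noncomputable def transMinimax {X : Type u} {T : ℕ} (ℓ : ℝ → ℝ → ℝ)
    (F : Set (X → ℝ)) (B : TransLearner X T) : ℝ :=
  ⨆ x : Fin T → X, ⨆ y : {y : Fin T → ℝ // Labels01 y},
    (transLoss ℓ B x y.1 - bestLoss ℓ F x y.1)

/-- Optimal (minimax) expected regret of transductive online regression. -/
noncomputable def transOpt (X : Type u) (T : ℕ) (ℓ : ℝ → ℝ → ℝ)
    (F : Set (X → ℝ)) : ℝ :=
  ⨅ B : TransLearner X T, transMinimax ℓ F B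

/-- Empirical Rademacher complexity of `F` on the sequence `x`. -/
noncomputable def radOn {X : Type u} {T : ℕ} (F : Set (X → ℝ)) (x : Fin T → X) : ℝ :=
  (∑ σ : Fin T → Bool, ⨆ f : F, (1 / (T : ℝ)) * ∑ t, rsign (σ t) * f.1 (x t)) / 2 ^ T

/-- (Worst-case) Rademacher complexity of `F` at horizon `T`. -/
noncomputable def radComplexity {X : Type u} (F : Set (X → ℝ)) (T : ℕ) : ℝ :=
  ⨆ x : Fin T → X, radOn F x

/-- A (randomized) Predictor over horizon `T`: after observing the first `t` examples
it predicts the entire sequence, using only those examples (causality) and a private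
random seed. -/
structure Predictor (X : Type u) (T : ℕ) where
  Ω : Type
  mΩ : MeasurableSpace Ω
  μ : @Measure Ω mΩ
  prob : @IsProbabilityMeasure Ω mΩ μ
  predict : ℕ → (Fin T → X) → Ω → Fin T → X
  causal : ∀ (t : ℕ) (x x' : Fin T → X) (ω : Ω),
      (∀ s : Fin T, (s : ℕ) < t → x s = x' s) → predict t x ω = predict t x' ω

/-- A Predictor is consistent if its prediction agrees with all examples observed so far. -/
def Predictor.Consistent {X : Type u} {T : ℕ} (P : Predictor X T) : Prop :=
  ∀ (t : ℕ) (x : Fin T → X) (ω : P.Ω) (s : Fin T), (s : ℕ) < t →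
    P.predict t x ω s = x s

/-- A Predictor is lazy if it keeps its prediction whenever it correctly predicted
the next example. -/
def Predictor.Lazy {X : Type u} {T : ℕ} (P : Predictor X T) : Prop :=
  ∀ (t : ℕ) (x : Fin T → X) (ω : P.Ω) (h : t < T),
    P.predict t x ω ⟨t, h⟩ = x ⟨t, h⟩ → P.predict (t + 1) x ω = P.predict t x ω

/-- A Predictor is `ε`-ball-lazy if it keeps its prediction whenever its prediction of
the next example is within distance `ε` of the true one. -/
def Predictor.EpsLazy {X : Type u} [PseudoMetricSpace X] {T : ℕ}
    (P : Predictor X T) (ε : ℝ) : Prop :=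
  ∀ (t : ℕ) (x : Fin T → X) (ω : P.Ω) (h : t < T),
    dist (P.predict t x ω ⟨t, h⟩) (x ⟨t, h⟩) ≤ ε →
      P.predict (t + 1) x ω = P.predict t x ω

/-- Expected number of zero-one mistakes of the Predictor on the example sequence `x`. -/
noncomputable def mistakes01 {X : Type u} {T : ℕ} (P : Predictor X T)
    (x : Fin T → X) : ℝ :=
  @expect P.Ω P.mΩ P.μ fun ω =>
    ∑ t : Fin T, if 1 ≤ (t : ℕ) ∧ P.predict (t : ℕ) x ω t ≠ x t then (1 : ℝ) else 0

/-- Expected number of `ε`-ball mistakes of the Predictor on the example sequence `x`. -/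
noncomputable def mistakesBall {X : Type u} [PseudoMetricSpace X] {T : ℕ}
    (P : Predictor X T) (ε : ℝ) (x : Fin T → X) : ℝ :=
  @expect P.Ω P.mΩ P.μ fun ω =>
    ∑ t : Fin T, if 1 ≤ (t : ℕ) ∧ ε ≤ dist (P.predict (t : ℕ) x ω t) (x t) then (1 : ℝ) else 0

/-- A (randomized) online learner with black-box access to the Predictor `P`: in round `t`
it predicts from the examples revealed so far (causality in `x` up to time `t`), the labels
of rounds `s < t`, its own random seed, and the Predictor's randomness (through which it can
query all of `P`'s predictions of future examples). -/
structure OnlineLearnerP {X : Type u} {T : ℕ} (P : Predictor X T) where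
  Ω : Type
  mΩ : MeasurableSpace Ω
  μ : @Measure Ω mΩ
  prob : @IsProbabilityMeasure Ω mΩ μ
  predict : (Fin T → X) → (Fin T → ℝ) → Fin T → Ω → P.Ω → ℝ
  causalX : ∀ (x x' : Fin T → X) (y : Fin T → ℝ) (t : Fin T) (ω : Ω) (ωP : P.Ω),
      (∀ s : Fin T, s ≤ t → x s = x' s) → predict x y t ω ωP = predict x' y t ω ωP
  causalY : ∀ (x : Fin T → X) (y y' : Fin T → ℝ) (t : Fin T) (ω : Ω) (ωP : P.Ω),
      (∀ s : Fin T, s < t → y s = y' s) → predict x y t ω ωP = predict x y' t ω ωP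

/-- Expected regret of an online learner (with Predictor access) on the stream `(x, y)`. -/
noncomputable def olPRegret {X : Type u} {T : ℕ} {P : Predictor X T}
    (ℓ : ℝ → ℝ → ℝ) (F : Set (X → ℝ)) (A : OnlineLearnerP P)
    (x : Fin T → X) (y : Fin T → ℝ) : ℝ :=
  (@expect P.Ω P.mΩ P.μ fun ωP =>
      @expect A.Ω A.mΩ A.μ fun ω => ∑ t, ℓ (A.predict x y t ω ωP) (y t))
    - bestLoss ℓ F x y

/-- Worst-case (over all streams with labels in `[0,1]`) expected regret of an online
learner with Predictor access. -/
noncomputable def olPSup {X : Type u} {T : ℕ} {P : Predictor X T}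
    (ℓ : ℝ → ℝ → ℝ) (F : Set (X → ℝ)) (A : OnlineLearnerP P) : ℝ :=
  ⨆ x : Fin T → X, ⨆ y : {y : Fin T → ℝ // Labels01 y}, olPRegret ℓ F A x y.1

/-- A (randomized) online learner in the standard (prediction-free) online setting. -/
structure OnlineLearner (X : Type u) (T : ℕ) where
  Ω : Type
  mΩ : MeasurableSpace Ω
  μ : @Measure Ω mΩ
  prob : @IsProbabilityMeasure Ω mΩ μ
  predict : (Fin T → X) → (Fin T → ℝ) → Fin T → Ω → ℝ
  causalX : ∀ (x x' : Fin T → X) (y : Fin T → ℝ) (t : Fin T) (ω : Ω),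
      (∀ s : Fin T, s ≤ t → x s = x' s) → predict x y t ω = predict x' y t ω
  causalY : ∀ (x : Fin T → X) (y y' : Fin T → ℝ) (t : Fin T) (ω : Ω),
      (∀ s : Fin T, s < t → y s = y' s) → predict x y t ω = predict x y' t ω

/-- Expected regret of a plain online learner on the stream `(x, y)`. -/
noncomputable def olRegret {X : Type u} {T : ℕ} (ℓ : ℝ → ℝ → ℝ)
    (F : Set (X → ℝ)) (A : OnlineLearner X T) (x : Fin T → X) (y : Fin T → ℝ) : ℝ :=
  (@expect A.Ω A.mΩ A.μ fun ω => ∑ t, ℓ (A.predict x y t ω) (y t)) - bestLoss ℓ F x y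

/-- Minimax expected regret of (adversarial) online regression, `R^ol(T, F)`. -/
noncomputable def olOpt (X : Type u) (T : ℕ) (ℓ : ℝ → ℝ → ℝ) (F : Set (X → ℝ)) : ℝ :=
  ⨅ A : OnlineLearner X T,
    ⨆ x : Fin T → X, ⨆ y : {y : Fin T → ℝ // Labels01 y}, olRegret ℓ F A x y.1

/-- The `k`-fold aggregated class `G(F_1, …, F_k)`. -/
def aggClass {X : Type u} {k : ℕ} (G : (Fin k → ℝ) → ℝ)
    (Fs : Fin k → Set (X → ℝ)) : Set (X → ℝ) :=
  {h | ∃ g : Fin k → X → ℝ, (∀ κ, g κ ∈ Fs κ) ∧ h = fun x => G fun κ => g κ x}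

/-- The aggregation mapping `G` commutes with shifts. -/
def CommutesWithShifts {k : ℕ} (G : (Fin k → ℝ) → ℝ) : Prop :=
  ∀ (v : Fin k → ℝ) (r : ℝ), G v - r = G fun κ => v κ - r

/-- The unit interval `[0,1]` as a type. -/
abbrev UnitInt : Type := ↥(Set.Icc (0 : ℝ) 1)

/-- The class of all functions `[0,1] → [0,1]` with total variation at most `V`. -/
def BVClass (V : ℝ) : Set (UnitInt → ℝ) :=
  {f | (∀ x, f x ∈ Set.Icc (0 : ℝ) 1) ∧ eVariationOn f Set.univ ≤ ENNReal.ofReal V}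

/-- The ramp function with foot `a` and shoulder `b`. -/
noncomputable def rampFn (a b : ℝ) (x : ℝ) : ℝ :=
  if x < a then 0 else if x ≤ b then (x - a) / (b - a) else 1

/-- The class of ramp functions of slope `M` on `[0,1]`. -/
noncomputable def RampClass (M : ℝ) : Set (UnitInt → ℝ) :=
  {f | ∃ a b : ℝ, 0 < a ∧ a < b ∧ b < 1 ∧ b = a + 1 / M ∧ ∀ x : UnitInt, f x = rampFn a b (x : ℝ)}

/-!
For signs `y`, let `S_i(y)` be the sum of the signs on the `i`-th block. As `x` is constant on
blocks, `∑_t y_t f(x_t) = ∑_i S_i f(x*_i)`, and shattering with the sign pattern of `S` gives an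
`f ∈ F` with `∑_i S_i f(x*_i) ≥ ∑_i S_i s_i + (α/2) ∑_i |S_i|`. Averaging over `y` kills the
first sum and turns every `|S_i|` into the mean absolute value `E|S_k|` of a `k`-step walk.

For Khintchine's bound, `E|S_{k+1}| = E|S_k| + P(S_k = 0)` because `|s + 1| + |s - 1| = 2|s|`
for every nonzero integer `s`, and `P(S_{2m} = 0) = C(2m, m)/4^m ≥ 1/(2√m)`. Since
`√(m + 1) + 1/(2√(m + 1)) ≥ √(m + 2)`, induction gives `E|S_{2m+1}| ≥ √(m + 1)`.
-/

open Finset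
open scoped BigOperators

section Expectation

variable {ι : Type*} [Fintype ι]

lemma expect_bool {M : Type*} [AddCommMonoid M] [Module ℚ≥0 M] (g : Bool → M) :
    𝔼 b, g b = (2 : ℚ≥0)⁻¹ • (g true + g false) := by
  simp [Finset.expect]

lemma expect_comp_eval {Z M : Type*} [DecidableEq ι] [Fintype Z] [Nonempty Z]
    [AddCommMonoid M] [Module ℚ≥0 M] (i : ι) (g : Z → M) :
    𝔼 w : ι → Z, g (w i) = 𝔼 z, g z := by
  rw [Fintype.expect_equiv (Equiv.funSplitAt i Z) (fun w => g (w i)) (fun p => g p.1)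
    fun _ => rfl, ← Finset.univ_product_univ, Finset.expect_product]
  simp

lemma expect_eq_sum_div_two_pow {n : ℕ} (g : (Fin n → Bool) → ℝ) :
    𝔼 y, g y = (∑ y, g y) / 2 ^ n := by
  simp [Fintype.expect_eq_sum_div_card]

end Expectation

lemma expect_rsign : 𝔼 b, rsign b = 0 := by
  rw [expect_bool]; simp [rsign]

lemma sum_rsign_eq_intCast {n : ℕ} (y : Fin n → Bool) :
    ∑ j, rsign (y j) = ((2 * #{j | y j} - n : ℤ) : ℝ) := by
  have h : ∀ j, rsign (y j) = 2 * (if y j then (1 : ℝ) else 0) - 1 := by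
    intro j; cases y j <;> norm_num [rsign]
  simp only [h, Finset.sum_sub_distrib, ← Finset.mul_sum, Finset.sum_boole]
  simp

lemma card_filter_card_filter_eq_choose (n m : ℕ) :
    #{y : Fin n → Bool | #{j | y j} = m} = n.choose m := by
  conv_rhs => rw [← Finset.card_fin n, ← Finset.card_powersetCard]
  refine Finset.card_bij (fun y _ => ({j | y j} : Finset (Fin n))) ?_ ?_ ?_
  · intro y hy
    simpa [Finset.mem_powersetCard] using hy
  · intro y₁ _ y₂ _ h
    funext j
    simpa using Finset.ext_iff.1 h j
  · intro t ht
    refine ⟨fun j => decide (j ∈ t), ?_, by ext; simp⟩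
    rw [Finset.mem_powersetCard] at ht
    simp [← ht.2]

lemma abs_add_one_add_abs_sub_one (m : ℤ) :
    |(m : ℝ) + 1| + |(m : ℝ) - 1| = 2 * |(m : ℝ)| + if m = 0 then 2 else 0 := by
  rcases lt_trichotomy m 0 with hm | rfl | hm
  · have : (m : ℝ) ≤ -1 := by exact_mod_cast Int.le_sub_one_of_lt hm
    rw [if_neg hm.ne, abs_of_nonpos (by linarith), abs_of_neg (by linarith),
      abs_of_neg (by linarith)]
    ring
  · norm_num
  · have : (1 : ℝ) ≤ m := by exact_mod_cast hm
    rw [if_neg hm.ne', abs_of_pos (by linarith), abs_of_nonneg (by linarith),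
      abs_of_pos (by linarith)]
    ring

lemma expect_abs_rsign_add_intCast (m : ℤ) :
    𝔼 b, |rsign b + m| = |(m : ℝ)| + if m = 0 then 1 else 0 := by
  rw [expect_bool, NNRat.smul_def]
  simp only [rsign, if_true, Bool.false_eq_true, if_false]
  rw [show (1 : ℝ) + m = m + 1 by ring, show (-1 : ℝ) + m = m - 1 by ring,
    abs_add_one_add_abs_sub_one]
  split_ifs <;> push_cast <;> ring

noncomputable def meanAbsWalk (k : ℕ) : ℝ := 𝔼 y : Fin k → Bool, |∑ j, rsign (y j)|

noncomputable def probWalkZero (k : ℕ) : ℝ :=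
  𝔼 y : Fin k → Bool, if ∑ j, rsign (y j) = 0 then 1 else 0

lemma meanAbsWalk_zero : meanAbsWalk 0 = 0 := by simp [meanAbsWalk]

lemma meanAbsWalk_succ (k : ℕ) : meanAbsWalk (k + 1) = meanAbsWalk k + probWalkZero k := by
  have hstep (z : Fin k → Bool) : 𝔼 b, |rsign b + ∑ j, rsign (z j)| =
      |∑ j, rsign (z j)| + if ∑ j, rsign (z j) = 0 then 1 else 0 := by
    rw [sum_rsign_eq_intCast, expect_abs_rsign_add_intCast]
    simp only [Int.cast_eq_zero]
  calc meanAbsWalk (k + 1)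
      = 𝔼 p : Bool × (Fin k → Bool), |rsign p.1 + ∑ j, rsign (p.2 j)| := by
        refine (Fintype.expect_equiv (Fin.consEquiv fun _ => Bool)
          (fun p : Bool × (Fin k → Bool) => |rsign p.1 + ∑ j, rsign (p.2 j)|)
          (fun y => |∑ j, rsign (y j)|) fun p => ?_).symm
        simp [Fin.sum_univ_succ]
    _ = 𝔼 z : Fin k → Bool, 𝔼 b, |rsign b + ∑ j, rsign (z j)| := by
        rw [← Finset.univ_product_univ, Finset.expect_product, Finset.expect_comm]
    _ = meanAbsWalk k + probWalkZero k := by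
        simp only [hstep, Finset.expect_add_distrib, meanAbsWalk, probWalkZero]

lemma probWalkZero_nonneg (k : ℕ) : 0 ≤ probWalkZero k :=
  Finset.expect_nonneg fun _ _ => by split_ifs <;> norm_num

lemma meanAbsWalk_mono : Monotone meanAbsWalk :=
  monotone_nat_of_le_succ fun k => by
    rw [meanAbsWalk_succ]; linarith [probWalkZero_nonneg k]

lemma probWalkZero_two_mul (m : ℕ) :
    probWalkZero (2 * m) = m.centralBinom / 4 ^ m := by
  have hzero : ∀ y : Fin (2 * m) → Bool, ∑ j, rsign (y j) = 0 ↔ #{j | y j} = m := by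
    intro y
    rw [sum_rsign_eq_intCast, Int.cast_eq_zero]
    omega
  simp only [probWalkZero, Fintype.expect_eq_sum_div_card, hzero, Finset.sum_boole,
    card_filter_card_filter_eq_choose, Nat.centralBinom_eq_two_mul_choose]
  simp [pow_mul]

lemma sixteen_pow_le_four_mul_centralBinom_sq {n : ℕ} (hn : 0 < n) :
    16 ^ n ≤ 4 * n * n.centralBinom ^ 2 := by
  induction n, hn using Nat.le_induction with
  | base => decide
  | succ n hn ih =>
    have hrec := Nat.succ_mul_centralBinom_succ n
    refine Nat.le_of_mul_le_mul_left ?_ n.succ_pos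
    calc (n + 1) * 16 ^ (n + 1) = 16 * (n + 1) * 16 ^ n := by ring
      _ ≤ 16 * (n + 1) * (4 * n * n.centralBinom ^ 2) := by gcongr
      _ ≤ 4 * (2 * (2 * n + 1) * n.centralBinom) ^ 2 := by
        nlinarith [Nat.zero_le (n.centralBinom ^ 2)]
      _ = (n + 1) * (4 * (n + 1) * (n + 1).centralBinom ^ 2) := by rw [← hrec]; ring

lemma inv_two_mul_sqrt_le_centralBinom_div {n : ℕ} (hn : 0 < n) :
    (2 * √n)⁻¹ ≤ n.centralBinom / 4 ^ n := by
  have h16 : ((4 : ℝ) ^ n) ^ 2 ≤ (2 * √n * n.centralBinom) ^ 2 := by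
    rw [mul_pow, mul_pow, Real.sq_sqrt n.cast_nonneg, ← pow_mul, mul_comm n 2, pow_mul]
    exact_mod_cast (by norm_num; exact sixteen_pow_le_four_mul_centralBinom_sq hn)
  have h4 : (4 : ℝ) ^ n ≤ 2 * √n * n.centralBinom :=
    (pow_le_pow_iff_left₀ (by positivity) (by positivity) two_ne_zero).1 h16
  rw [inv_le_iff_one_le_mul₀ (by positivity), div_mul_eq_mul_div, one_le_div (by positivity)]
  linarith

lemma sqrt_add_one_le_sqrt_add_inv {x : ℝ} (hx : 0 < x) : √(x + 1) ≤ √x + (2 * √x)⁻¹ := by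
  have hu : 0 < √x := Real.sqrt_pos.2 hx
  rw [Real.sqrt_le_iff]
  refine ⟨by positivity, ?_⟩
  have : (√x + (2 * √x)⁻¹) ^ 2 = √x ^ 2 + 1 + (2 * √x)⁻¹ ^ 2 := by field_simp; ring
  rw [this, Real.sq_sqrt hx.le]
  linarith [sq_nonneg (2 * √x)⁻¹]

lemma sqrt_succ_le_meanAbsWalk (m : ℕ) : √(m + 1) ≤ meanAbsWalk (2 * m + 1) := by
  induction m with
  | zero =>
    have := probWalkZero_two_mul 0
    simp_all [meanAbsWalk_succ, meanAbsWalk_zero]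
  | succ m ih =>
    have hstep := inv_two_mul_sqrt_le_centralBinom_div (n := m + 1) (by omega)
    have hmono := meanAbsWalk_mono (show 2 * m + 1 ≤ 2 * (m + 1) by omega)
    calc √((m + 1 : ℕ) + 1 : ℝ) ≤ √(m + 1 : ℝ) + (2 * √(m + 1 : ℝ))⁻¹ := by
          push_cast; exact sqrt_add_one_le_sqrt_add_inv (by positivity)
      _ ≤ meanAbsWalk (2 * (m + 1)) + probWalkZero (2 * (m + 1)) := by
          rw [probWalkZero_two_mul]; push_cast at hstep; linarith
      _ = meanAbsWalk (2 * (m + 1) + 1) := (meanAbsWalk_succ _).symm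

theorem sqrt_half_le_meanAbsWalk (k : ℕ) : √(k / 2) ≤ meanAbsWalk k := by
  rcases k with _ | n
  · simp [meanAbsWalk_zero]
  · calc √((n + 1 : ℕ) / 2 : ℝ) ≤ √((n / 2 : ℕ) + 1) := by
          gcongr
          rw [div_le_iff₀ two_pos]
          exact_mod_cast (by omega : n + 1 ≤ (n / 2 + 1) * 2)
      _ ≤ meanAbsWalk (2 * (n / 2) + 1) := sqrt_succ_le_meanAbsWalk _
      _ ≤ meanAbsWalk (n + 1) := meanAbsWalk_mono (by omega)

section Shattering

variable {X ι : Type*} [Fintype ι] {F : Set (X → ℝ)} {α : ℝ} {xs : ι → X} {s : ι → ℝ}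

lemma exists_mem_sum_le_sum_mul_of_shatters
    (hshat : ∀ σ : ι → Bool, ∃ f ∈ F, ∀ i : ι,
      (if σ i then f (xs i) - s i else s i - f (xs i)) ≥ α / 2)
    (c : ι → ℝ) : ∃ f ∈ F, ∑ i, (c i * s i + α / 2 * |c i|) ≤ ∑ i, c i * f (xs i) := by
  obtain ⟨f, hf, hmargin⟩ := hshat fun i => decide (0 ≤ c i)
  refine ⟨f, hf, Finset.sum_le_sum fun i _ => ?_⟩
  have h := hmargin i
  by_cases hc : 0 ≤ c i
  · simp only [hc, decide_true, if_true] at h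
    rw [abs_of_nonneg hc]
    nlinarith
  · simp only [hc, decide_false, Bool.false_eq_true, if_false] at h
    rw [abs_of_neg (not_le.1 hc)]
    nlinarith

lemma bddAbove_range_sum_mul {τ : Type*} [Fintype τ]
    (hFrange : ∀ f ∈ F, ∀ x : X, f x ∈ Set.Icc (-1 : ℝ) 1) (w : τ → ℝ) (x : τ → X) :
    BddAbove (Set.range fun f : F => ∑ t, w t * f.1 (x t)) := by
  refine ⟨∑ t, |w t|, ?_⟩
  rintro _ ⟨f, rfl⟩
  refine Finset.sum_le_sum fun t _ => ?_
  have hf := abs_le.2 (hFrange f.1 f.2 (x t))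
  calc w t * f.1 (x t) ≤ |w t * f.1 (x t)| := le_abs_self _
    _ ≤ |w t| := by rw [abs_mul]; exact mul_le_of_le_one_right (abs_nonneg _) hf

end Shattering

section Blocks

variable {ι κ τ : Type*} [Fintype κ] [Fintype τ]

def blockSum (e : ι × κ ≃ τ) (y : τ → Bool) (i : ι) : ℝ := ∑ j, rsign (y (e (i, j)))

lemma sum_rsign_mul_eq_sum_blockSum_mul {X : Type*} [Fintype ι] (e : ι × κ ≃ τ) {x : τ → X}
    {xs : ι → X} (hx : ∀ i j, x (e (i, j)) = xs i) (y : τ → Bool) (g : X → ℝ) :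
    ∑ t, rsign (y t) * g (x t) = ∑ i, blockSum e y i * g (xs i) := by
  rw [← e.sum_comp, Fintype.sum_prod_type]
  simp only [blockSum, hx, Finset.sum_mul]

lemma expect_comp_block {Z M : Type*} [Fintype ι] [DecidableEq κ] [DecidableEq τ] [Fintype Z]
    [Nonempty Z] [AddCommMonoid M] [Module ℚ≥0 M] (e : ι × κ ≃ τ) (i : ι) (g : (κ → Z) → M) :
    𝔼 y : τ → Z, g (fun j => y (e (i, j))) = 𝔼 z, g z := by
  classical
  rw [← expect_comp_eval i g]
  exact Fintype.expect_equiv ((e.arrowCongr (Equiv.refl Z)).symm.trans (Equiv.curry ι κ Z))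
    _ _ fun y => rfl

lemma expect_blockSum [DecidableEq τ] (e : ι × κ ≃ τ) (i : ι) : 𝔼 y, blockSum e y i = 0 := by
  simp only [blockSum, Finset.expect_sum_comm]
  exact Finset.sum_eq_zero fun j _ => (expect_comp_eval (e (i, j)) rsign).trans expect_rsign

lemma expect_abs_blockSum [Fintype ι] [DecidableEq τ] {k : ℕ} (e : ι × Fin k ≃ τ) (i : ι) :
    𝔼 y, |blockSum e y i| = meanAbsWalk k :=
  expect_comp_block e i fun z => |∑ j, rsign (z j)|

end Blocks

def blockEquiv {k d T : ℕ} (hT : T = k * d) : Fin d × Fin k ≃ Fin T :=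
  finProdFinEquiv.trans (finCongr (by rw [hT, Nat.mul_comm]))

lemma blockEquiv_apply_div {k d T : ℕ} (hT : T = k * d) (i : Fin d) (j : Fin k) :
    (blockEquiv hT (i, j) : ℕ) / k = i := by
  have hk : 0 < k := j.pos
  simp [blockEquiv, finProdFinEquiv, Nat.add_mul_div_left _ _ hk, Nat.div_eq_of_lt j.isLt]

theorem stmt_18_general (X : Type u) (F : Set (X → ℝ))
    (hFrange : ∀ f ∈ F, ∀ x : X, f x ∈ Set.Icc (-1 : ℝ) 1)
    (α : ℝ) (hα : 0 < α) (d k : ℕ)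
    (xs : Fin d → X) (s : Fin d → ℝ)
    (hshat : ∀ σ : Fin d → Bool, ∃ f ∈ F, ∀ i : Fin d,
      (if σ i then f (xs i) - s i else s i - f (xs i)) ≥ α / 2)
    (T : ℕ) (hT : T = k * d)
    (x : Fin T → X)
    (hx : ∀ (t : Fin T) (i : Fin d), (t : ℕ) / k = (i : ℕ) → x t = xs i) :
    α * d / 2 * ((∑ y : Fin k → Bool, |∑ j, rsign (y j)|) / 2 ^ k) ≤
        (∑ y : Fin T → Bool, ⨆ f : F, ∑ t, rsign (y t) * f.1 (x t)) / 2 ^ T ∧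
      α * Real.sqrt ((T : ℝ) * d / 8) ≤
        α * d / 2 * ((∑ y : Fin k → Bool, |∑ j, rsign (y j)|) / 2 ^ k) := by
  set e := blockEquiv hT
  have hxe : ∀ i j, x (e (i, j)) = xs i := fun i j => hx _ i (blockEquiv_apply_div hT i j)
  have hsup (y : Fin T → Bool) : ∑ i, (blockSum e y i * s i + α / 2 * |blockSum e y i|) ≤
      ⨆ f : F, ∑ t, rsign (y t) * f.1 (x t) := by
    obtain ⟨f, hf, hle⟩ := exists_mem_sum_le_sum_mul_of_shatters hshat (blockSum e y)
    refine (hle.trans_eq ?_).trans (le_ciSup (bddAbove_range_sum_mul hFrange _ x) ⟨f, hf⟩)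
    exact (sum_rsign_mul_eq_sum_blockSum_mul e hxe y f).symm
  have hmean : 𝔼 y, ∑ i, (blockSum e y i * s i + α / 2 * |blockSum e y i|) =
      α * d / 2 * meanAbsWalk k := by
    simp only [Finset.expect_sum_comm, Finset.expect_add_distrib, ← Finset.expect_mul,
      ← Finset.mul_expect, expect_blockSum, expect_abs_blockSum]
    simp only [zero_mul, zero_add, Finset.sum_const, Finset.card_univ, Fintype.card_fin]
    ring
  rw [← expect_eq_sum_div_two_pow, ← expect_eq_sum_div_two_pow]
  refine ⟨hmean ▸ Finset.expect_le_expect fun y _ => hsup y, ?_⟩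
  calc α * √(T * d / 8) = α * d / 2 * √(k / 2) := by
        rw [hT, show ((k * d : ℕ) : ℝ) * d / 8 = (d / 2) ^ 2 * (k / 2) by push_cast; ring,
          Real.sqrt_mul (by positivity), Real.sqrt_sq (by positivity)]
        ring
    _ ≤ α * d / 2 * meanAbsWalk k :=
        mul_le_mul_of_nonneg_left (sqrt_half_le_meanAbsWalk k) (by positivity)

/-- Anti-concentration lower bound on a shattered block sequence:
if `x*_1, …, x*_d` is `α`-shattered by a `[−1,1]`-valued class `F` with witness `s`,
`T = k d`, and `x` consists of `k` consecutive copies of each `x*_i`, then for uniform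
i.i.d. signs `y`, `E_y[sup_{f ∈ F} Σ_t y_t f(x_t)] ≥ (α d / 2) E[|Σ_{j=1}^k y_j|]
≥ α √(T d / 8)` (the last step by Khintchine's inequality). -/
theorem stmt_18 (X : Type u) (F : Set (X → ℝ)) (hF : F.Nonempty)
    (hFrange : ∀ f ∈ F, ∀ x : X, f x ∈ Set.Icc (-1 : ℝ) 1)
    (α : ℝ) (hα : 0 < α) (d k : ℕ) (hd : 0 < d) (hk : 0 < k)
    (xs : Fin d → X) (s : Fin d → ℝ)
    (hshat : ∀ σ : Fin d → Bool, ∃ f ∈ F, ∀ i : Fin d,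
      (if σ i then f (xs i) - s i else s i - f (xs i)) ≥ α / 2)
    (T : ℕ) (hT : T = k * d)
    (x : Fin T → X)
    (hx : ∀ (t : Fin T) (i : Fin d), (t : ℕ) / k = (i : ℕ) → x t = xs i) :
    α * d / 2 * ((∑ y : Fin k → Bool, |∑ j, rsign (y j)|) / 2 ^ k) ≤
        (∑ y : Fin T → Bool, ⨆ f : F, ∑ t, rsign (y t) * f.1 (x t)) / 2 ^ T ∧
      α * Real.sqrt ((T : ℝ) * d / 8) ≤
        α * d / 2 * ((∑ y : Fin k → Bool, |∑ j, rsign (y j)|) / 2 ^ k) :=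
  stmt_18_general X F hFrange α hα d k xs s hshat T hT x hx

end OLR
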